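/- arXiv:1307.3839 — 2 statements merged into one kernel-verified Lean document; each statement's English description precedes it below -/
import Mathlib

section
/- Let F be the free group on two generators, and let τ : F × F → ℤ be the group homomorphism determined by sending each of the four standard generators (the two generators of the first factor and the two generators of the second factor) to 1 ∈ ℤ; equivalently, τ(w₁, w₂) is the sum of the exponent sums of w₁ and w₂. Then the kernel K of τ is a finitely generated group. -/
/-!
Let `a, b` be the generators of `F₂` and `H ≤ F₂ × F₂` the subgroup generated by `(ab⁻¹, 1)`,
`(1, ab⁻¹)` and `(a, a⁻¹)`, all of which lie in `ker τ`. Conjugation by `t = (a, 1)` preserves `H`,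
since on `F₂ × 1` it agrees with conjugation by `(a, a⁻¹)` and it fixes `1 × F₂`. Moreover `H` and
`t` together generate `F₂ × F₂`, so `H` is normal and every element is `h tᵏ` with `h ∈ H`; as
`τ (h tᵏ) = k`, the kernel of `τ` is exactly `H`.
-/

open Subgroup

section General

variable {G : Type*} [Group G]

theorem Subgroup.conj_mem_closure_of_conj_mem {s : Set G} {g : G}
    (h : ∀ x ∈ s, g * x * g⁻¹ ∈ closure s) {x : G} (hx : x ∈ closure s) :
    g * x * g⁻¹ ∈ closure s :=
  (closure_le ((closure s).comap (MulAut.conj g).toMonoidHom)).2 h hx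

theorem Subgroup.mem_normalizer_closure_of_conj_mem {s : Set G} {g : G}
    (h : ∀ x ∈ s, g * x * g⁻¹ ∈ closure s) (h' : ∀ x ∈ s, g⁻¹ * x * g ∈ closure s) :
    g ∈ normalizer (closure s : Set G) := by
  refine mem_normalizer_iff.2 fun x ↦ ⟨conj_mem_closure_of_conj_mem h, fun hx ↦ ?_⟩
  simpa [mul_assoc] using conj_mem_closure_of_conj_mem (g := g⁻¹) (by simpa using h') hx

theorem Subgroup.normal_of_mem_normalizer_of_sup_zpowers_eq_top {H : Subgroup G} {t : G}
    (ht : t ∈ normalizer (H : Set G)) (hsup : H ⊔ zpowers t = ⊤) : H.Normal :=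
  normalizer_eq_top_iff.1 <| top_le_iff.1 <| hsup ▸ sup_le le_normalizer (zpowers_le.2 ht)

theorem MonoidHom.ker_eq_of_sup_zpowers_eq_top {M : Type*} [Group M] (f : G →* M)
    (N : Subgroup G) [N.Normal] (hN : N ≤ f.ker) {t : G} (ht : ¬IsOfFinOrder (f t))
    (hsup : N ⊔ zpowers t = ⊤) : f.ker = N := by
  refine le_antisymm (fun g hg ↦ ?_) hN
  obtain ⟨y, hy, _, ⟨k, rfl⟩, rfl⟩ := mem_sup_of_normal_left.1 (hsup ▸ mem_top g)
  have hk : f t ^ k = f t ^ (0 : ℤ) := by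
    simpa [(MonoidHom.mem_ker).1 (hN hy)] using (MonoidHom.mem_ker).1 hg
  simpa [injective_zpow_iff_not_isOfFinOrder.2 ht hk] using hy

theorem FreeGroup.subgroup_prod_eq_top_of_of_mem {α β : Type*}
    {K : Subgroup (FreeGroup α × FreeGroup β)}
    (hl : ∀ i, (of i, 1) ∈ K) (hr : ∀ j, (1, of j) ∈ K) : K = ⊤ := by
  have hinl : ∀ u, (u, 1) ∈ K := fun u ↦
    (closure_le (K.comap (MonoidHom.inl _ _))).2 (Set.range_subset_iff.2 hl)
      (closure_range_of α ▸ mem_top u)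
  have hinr : ∀ v, (1, v) ∈ K := fun v ↦
    (closure_le (K.comap (MonoidHom.inr _ _))).2 (Set.range_subset_iff.2 hr)
      (closure_range_of β ▸ mem_top v)
  exact eq_top_iff.2 fun ⟨u, v⟩ _ ↦ by simpa using K.mul_mem (hinl u) (hinr v)

end General

namespace Stallings

local notation "F₂" => FreeGroup (Fin 2)

def a : F₂ := FreeGroup.of 0
def b : F₂ := FreeGroup.of 1

def kernelGenerators : Set (F₂ × F₂) := {(a * b⁻¹, 1), (1, a * b⁻¹), (a, a⁻¹)}

theorem kernelGenerators_finite : kernelGenerators.Finite :=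
  ((Set.finite_singleton _).insert _).insert _

theorem kernelGenerators_subset_ker (τ : F₂ × F₂ →* Multiplicative ℤ)
    (h₁ : ∀ i : Fin 2, τ (FreeGroup.of i, 1) = Multiplicative.ofAdd 1)
    (h₂ : ∀ i : Fin 2, τ (1, FreeGroup.of i) = Multiplicative.ofAdd 1) :
    kernelGenerators ⊆ τ.ker := by
  have ha₁ : τ (a, 1) = Multiplicative.ofAdd 1 := h₁ 0
  have hb₁ : τ (b, 1) = Multiplicative.ofAdd 1 := h₁ 1
  have ha₂ : τ (1, a) = Multiplicative.ofAdd 1 := h₂ 0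
  have hb₂ : τ (1, b) = Multiplicative.ofAdd 1 := h₂ 1
  rintro _ (rfl | rfl | rfl) <;> rw [SetLike.mem_coe, MonoidHom.mem_ker]
  · rw [show ((a * b⁻¹, 1) : F₂ × F₂) = (a, 1) * (b, 1)⁻¹ by simp, map_mul, map_inv, ha₁, hb₁,
      mul_inv_cancel]
  · rw [show ((1, a * b⁻¹) : F₂ × F₂) = (1, a) * (1, b)⁻¹ by simp, map_mul, map_inv, ha₂, hb₂,
      mul_inv_cancel]
  · rw [show ((a, a⁻¹) : F₂ × F₂) = (a, 1) * (1, a)⁻¹ by simp, map_mul, map_inv, ha₁, ha₂,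
      mul_inv_cancel]

theorem mem_normalizer_closure_kernelGenerators :
    ((a, 1) : F₂ × F₂) ∈ normalizer (closure kernelGenerators : Set (F₂ × F₂)) := by
  have hinl : ((a * b⁻¹, 1) : F₂ × F₂) ∈ closure kernelGenerators :=
    subset_closure (by simp [kernelGenerators])
  have hinr : ((1, a * b⁻¹) : F₂ × F₂) ∈ closure kernelGenerators :=
    subset_closure (by simp [kernelGenerators])
  have hdiag : ((a, a⁻¹) : F₂ × F₂) ∈ closure kernelGenerators :=
    subset_closure (by simp [kernelGenerators])
  apply mem_normalizer_closure_of_conj_mem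
  · rintro _ (rfl | rfl | rfl)
    · convert mul_mem (mul_mem hdiag hinl) (inv_mem hdiag) using 1
      ext <;> simp
    · simpa using hinr
    · simpa using hdiag
  · rintro _ (rfl | rfl | rfl)
    · convert mul_mem (mul_mem (inv_mem hdiag) hinl) hdiag using 1
      ext <;> simp
    · simpa using hinr
    · simpa using hdiag

theorem closure_kernelGenerators_sup_zpowers :
    closure kernelGenerators ⊔ zpowers ((a, 1) : F₂ × F₂) = ⊤ := by
  set K := closure kernelGenerators ⊔ zpowers ((a, 1) : F₂ × F₂)
  have hgen {x : F₂ × F₂} (hx : x ∈ kernelGenerators) : x⁻¹ ∈ K :=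
    K.inv_mem (mem_sup_left (subset_closure hx))
  have ha₁ : ((a, 1) : F₂ × F₂) ∈ K := mem_sup_right (mem_zpowers _)
  have ha₂ : ((1, a) : F₂ × F₂) ∈ K := by
    simpa using K.mul_mem (hgen (x := (a, a⁻¹)) (by simp [kernelGenerators])) ha₁
  have hb₁ : ((b, 1) : F₂ × F₂) ∈ K := by
    simpa using K.mul_mem (hgen (x := (a * b⁻¹, 1)) (by simp [kernelGenerators])) ha₁
  have hb₂ : ((1, b) : F₂ × F₂) ∈ K := by
    simpa using K.mul_mem (hgen (x := (1, a * b⁻¹)) (by simp [kernelGenerators])) ha₂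
  refine FreeGroup.subgroup_prod_eq_top_of_of_mem (fun i ↦ ?_) (fun i ↦ ?_) <;> fin_cases i
  exacts [ha₁, hb₁, ha₂, hb₂]

end Stallings

open Stallings in
/-- Stallings' example: the kernel of the homomorphism `F₂ × F₂ → ℤ` sending each
standard generator to `1` is finitely generated. -/
theorem stallings_kernel_fg
    (τ : FreeGroup (Fin 2) × FreeGroup (Fin 2) →* Multiplicative ℤ)
    (h₁ : ∀ i : Fin 2, τ (FreeGroup.of i, 1) = Multiplicative.ofAdd 1)
    (h₂ : ∀ i : Fin 2, τ (1, FreeGroup.of i) = Multiplicative.ofAdd 1) :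
    Subgroup.FG τ.ker := by
  have := normal_of_mem_normalizer_of_sup_zpowers_eq_top mem_normalizer_closure_kernelGenerators
    closure_kernelGenerators_sup_zpowers
  have hτa : ¬IsOfFinOrder (τ (a, 1)) := by
    rw [show τ (a, 1) = Multiplicative.ofAdd 1 from h₁ 0]
    exact not_isOfFinOrder_of_isMulTorsionFree (by decide)
  have hker : τ.ker = closure kernelGenerators :=
    τ.ker_eq_of_sup_zpowers_eq_top _ ((closure_le _).2 (kernelGenerators_subset_ker τ h₁ h₂))
      hτa closure_kernelGenerators_sup_zpowers
  exact (fg_iff _).2 ⟨kernelGenerators, hker.symm, kernelGenerators_finite⟩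
end

section
/- Let F be the free group on two generators, and let τ : F × F → ℤ be the group homomorphism determined by sending each of the four standard generators (the two generators of the first factor and the two generators of the second factor) to 1 ∈ ℤ; equivalently, τ(w₁, w₂) is the sum of the exponent sums of w₁ and w₂. Then the kernel K of τ is not finitely presentable: there do not exist a natural number n and a finite set of relators R ⊆ FreeGroup(Fin n) such that the presented group ⟨Fin n ∣ R⟩ is isomorphic to K. -/
/-!
Write `F_ℤ` for the free group on `ℤ`, on which `ℤ` acts by shifting the generators. The
exponent sum `F₂ → ℤ` splits, and its kernel is free on the elements `xⁿ (y x⁻¹) x⁻ⁿ`, so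
`F₂ ≅ F_ℤ ⋊ ℤ`. Hence `ker τ`, the fibre product of two copies of `F₂` over `ℤ` (after inverting
the generators of the second copy), is `(F_ℤ × F_ℤ) ⋊ ℤ`. This group is presented on `a`, `b`, `t`
by the relators `[a, tᵏ b t⁻ᵏ]`, `k ∈ ℤ`. If it were finitely presented, finitely many of these
relators, say those with `k ≤ M`, would already normally generate all of them. They do not: in
`Perm ℤ`, `a ↦ (M, M+1)`, `b ↦ (-2, -1)`, `t ↦ (· + 1)` sends `tᵏ b t⁻ᵏ` to `(k-2, k-1)`, which
commutes with `(M, M+1)` for `k ≤ M` but not for `k = M + 1`.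
-/

open Function Subgroup FreeGroup
open scoped commutatorElement

theorem Subgroup.IsFinitelyNormallyGenerated.exists_le_of_le_iSup {G ι : Type*} [Group G]
    [Nonempty ι] {N : Subgroup G} (hN : N.IsFinitelyNormallyGenerated) {D : ι → Subgroup G}
    [∀ i, (D i).Normal] (hD : Directed (· ≤ ·) D) (hle : N ≤ ⨆ i, D i) : ∃ i, N ≤ D i := by
  obtain ⟨S, hS, rfl⟩ := hN
  have : Finite S := hS
  choose j hj using fun s : S => (mem_iSup_of_directed hD).1 (hle (subset_normalClosure s.2))
  obtain ⟨i, hi⟩ := hD.finite_le j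
  exact ⟨i, normalClosure_le_normal fun s hs => hi ⟨s, hs⟩ (hj ⟨s, hs⟩)⟩

theorem Group.IsFinitelyPresented.ker_isFinitelyNormallyGenerated {G α : Type*} [Group G]
    [Finite α] [hG : Group.IsFinitelyPresented G] (φ : FreeGroup α →* G) (hφ : Surjective φ) :
    φ.ker.IsFinitelyNormallyGenerated := by
  obtain ⟨n, ψ, hψ, R, hR, hRψ⟩ := hG.out
  choose a ha using fun x : α => hψ (φ (of x))
  choose b hb using fun j : Fin n => hφ (ψ (of j))
  have hA : ψ.comp (FreeGroup.lift a) = φ := by ext x; simp [ha]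
  have hB : φ.comp (FreeGroup.lift b) = ψ := by ext j; simp [hb]
  set BA := (FreeGroup.lift b).comp (FreeGroup.lift a)
  set S := FreeGroup.lift b '' R ∪ Set.range fun x => (BA (of x))⁻¹ * of x
  refine ⟨S, (hR.image _).union (Set.finite_range _), le_antisymm
    (normalClosure_le_normal ?_) fun w hw => ?_⟩
  · rintro _ (⟨r, hr, rfl⟩ | ⟨x, rfl⟩)
    · rw [SetLike.mem_coe, MonoidHom.mem_ker, ← MonoidHom.comp_apply, hB, ← MonoidHom.mem_ker,
        ← hRψ]
      exact subset_normalClosure hr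
    · simp [BA, ← MonoidHom.comp_apply, hB, ha]
  · set N := normalClosure S
    have hBA : (QuotientGroup.mk' N).comp BA = QuotientGroup.mk' N :=
      ext_hom _ _ fun x => QuotientGroup.eq.2 (subset_normalClosure (Or.inr ⟨x, rfl⟩))
    have hRN : ψ.ker ≤ N.comap (FreeGroup.lift b) := hRψ ▸ normalClosure_le_normal
      fun r hr => subset_normalClosure (Or.inl ⟨r, hr, rfl⟩)
    have hAw : FreeGroup.lift a w ∈ ψ.ker := by
      rwa [MonoidHom.mem_ker, ← MonoidHom.comp_apply, hA]
    rw [← QuotientGroup.eq_one_iff, ← QuotientGroup.mk'_apply, ← hBA, MonoidHom.comp_apply,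
      QuotientGroup.mk'_apply, QuotientGroup.eq_one_iff]
    exact hRN hAw

theorem FreeGroup.commute_of_commute_of {α G : Type*} [Group G] {f g : FreeGroup α →* G}
    (h : ∀ a b, Commute (f (of a)) (g (of b))) (x y : FreeGroup α) : Commute (f x) (g y) := by
  induction x using FreeGroup.induction_on with
  | C1 => simp
  | of a =>
    induction y using FreeGroup.induction_on with
    | C1 => simp
    | of b => exact h a b
    | inv_of b hb => simpa using hb.inv_right
    | mul y z hy hz => simpa using hy.mul_right hz
  | inv_of a ha => simpa using ha.inv_left
  | mul x x' hx hx' => simpa using hx.mul_left hx'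

namespace SemidirectProduct

variable {N₁ N₂ G : Type*} [Group N₁] [Group N₂] [Group G]

@[simp] lemma inr_zpow_mul_inl_mul_inv {φ : Multiplicative ℤ →* MulAut N₁} (x : N₁) (n : ℤ) :
    (inr (Multiplicative.ofAdd 1) : N₁ ⋊[φ] _) ^ n * inl x * (inr (Multiplicative.ofAdd 1) ^ n)⁻¹ =
      inl (φ (Multiplicative.ofAdd n) x) := by
  simp [← _root_.map_zpow, ← ofAdd_zsmul, inl_aut]

variable (φ₁ : G →* MulAut N₁) (φ₂ : G →* MulAut N₂)

def prodAction : G →* MulAut (N₁ × N₂) where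
  toFun g := MulEquiv.prodCongr (φ₁ g) (φ₂ g)
  map_one' := by ext <;> simp only [_root_.map_one] <;> rfl
  map_mul' _ _ := by ext <;> simp only [_root_.map_mul] <;> rfl

@[simp] lemma prodAction_apply (g : G) (p : N₁ × N₂) :
    prodAction φ₁ φ₂ g p = (φ₁ g p.1, φ₂ g p.2) := rfl

def toProd : (N₁ × N₂) ⋊[prodAction φ₁ φ₂] G →* (N₁ ⋊[φ₁] G) × (N₂ ⋊[φ₂] G) :=
  (map (MonoidHom.fst N₁ N₂) (MonoidHom.id G) fun _ => rfl).prod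
    (map (MonoidHom.snd N₁ N₂) (MonoidHom.id G) fun _ => rfl)

@[simp] lemma toProd_apply (x : (N₁ × N₂) ⋊[prodAction φ₁ φ₂] G) :
    toProd φ₁ φ₂ x = (⟨x.left.1, x.right⟩, ⟨x.left.2, x.right⟩) := rfl

lemma toProd_injective : Injective (toProd φ₁ φ₂) := fun x y h => by
  simp only [toProd_apply, Prod.ext_iff, SemidirectProduct.ext_iff] at h ⊢
  exact ⟨⟨h.1.1, h.2.1⟩, h.1.2⟩

lemma mem_range_toProd {p : (N₁ ⋊[φ₁] G) × (N₂ ⋊[φ₂] G)} :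
    p ∈ (toProd φ₁ φ₂).range ↔ p.1.right = p.2.right := by
  refine ⟨?_, fun h => ⟨⟨(p.1.left, p.2.left), p.1.right⟩, ?_⟩⟩
  · rintro ⟨x, rfl⟩
    rfl
  · ext <;> simp [h]

variable {φ₁ φ₂} {H : Type*} [Group H] (f₁ : N₁ →* H) (f₂ : N₂ →* H)
  (comm : ∀ n₁ n₂, Commute (f₁ n₁) (f₂ n₂)) (fg : G →* H)
  (h₁ : ∀ g, f₁.comp (φ₁ g).toMonoidHom = (MulAut.conj (fg g)).toMonoidHom.comp f₁)
  (h₂ : ∀ g, f₂.comp (φ₂ g).toMonoidHom = (MulAut.conj (fg g)).toMonoidHom.comp f₂)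

def liftProd : (N₁ × N₂) ⋊[prodAction φ₁ φ₂] G →* H :=
  lift (f₁.noncommCoprod f₂ comm) fg fun g => MonoidHom.ext fun p => by
    have e₁ := DFunLike.congr_fun (h₁ g) p.1
    have e₂ := DFunLike.congr_fun (h₂ g) p.2
    simp only [MonoidHom.comp_apply, MulEquiv.coe_toMonoidHom, MulAut.conj_apply] at e₁ e₂
    simp only [MonoidHom.comp_apply, MulEquiv.coe_toMonoidHom, prodAction_apply,
      MonoidHom.noncommCoprod_apply, MulAut.conj_apply, e₁, e₂]
    group

@[simp] lemma liftProd_inl (p : N₁ × N₂) :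
    liftProd f₁ f₂ comm fg h₁ h₂ (inl p) = f₁ p.1 * f₂ p.2 := lift_inl ..

@[simp] lemma liftProd_inr (g : G) : liftProd f₁ f₂ comm fg h₁ h₂ (inr g) = fg g := lift_inr ..

end SemidirectProduct

namespace Stallings

open Multiplicative SemidirectProduct

def exponentSum {α : Type*} : FreeGroup α →* Multiplicative ℤ := FreeGroup.lift fun _ => ofAdd 1

def invertGenerators {α : Type*} : FreeGroup α ≃* FreeGroup α :=
  (FreeGroup.lift fun a => (of a)⁻¹).toMulEquiv (FreeGroup.lift fun a => (of a)⁻¹)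
    (by ext; simp) (by ext; simp)

lemma exponentSum_invertGenerators {α : Type*} (w : FreeGroup α) :
    exponentSum (invertGenerators w) = (exponentSum w)⁻¹ := by
  have : (exponentSum : FreeGroup α →* _).comp invertGenerators.toMonoidHom = exponentSum⁻¹ := by
    ext
    simp [invertGenerators, exponentSum]
  exact DFunLike.congr_fun this w

abbrev F₂ := FreeGroup (Fin 2)

lemma eq_coprod_exponentSum (τ : F₂ × F₂ →* Multiplicative ℤ)
    (h₁ : ∀ i : Fin 2, τ (of i, 1) = ofAdd 1) (h₂ : ∀ i : Fin 2, τ (1, of i) = ofAdd 1) :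
    τ = exponentSum.coprod exponentSum := by
  rw [← τ.coprod_unique]
  congr <;> ext i
  exacts [h₁ i, h₂ i]

def shift : Multiplicative ℤ →* MulAut (FreeGroup ℤ) where
  toFun k := freeGroupCongr (Equiv.addRight k.toAdd)
  map_one' := by ext; simp
  map_mul' k l := by
    rw [MulAut.mul_def, freeGroupCongr_trans]
    congr 1
    ext
    simp only [Equiv.coe_addRight, toAdd_mul, Equiv.coe_trans, comp_apply]
    ring

@[simp] lemma shift_of (k : Multiplicative ℤ) (n : ℤ) : shift k (of n) = of (n + k.toAdd) := by
  simp [shift]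

section conjugatesLift

variable {G : Type*} [Group G]

def conjugatesLift (t x : G) : FreeGroup ℤ →* G := FreeGroup.lift fun n => t ^ n * x * t ^ (-n)

@[simp] lemma conjugatesLift_of (t x : G) (n : ℤ) :
    conjugatesLift t x (of n) = t ^ n * x * t ^ (-n) :=
  FreeGroup.lift_apply_of

lemma conjugatesLift_comp_shift (t x : G) (k : Multiplicative ℤ) :
    (conjugatesLift t x).comp (shift k).toMonoidHom =
      (MulAut.conj (t ^ k.toAdd)).toMonoidHom.comp (conjugatesLift t x) := by
  ext n
  simp only [MonoidHom.comp_apply, MulEquiv.coe_toMonoidHom, shift_of, conjugatesLift_of,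
    MulAut.conj_apply]
  group

lemma commute_conjugatesLift {t a b : G} (h : ∀ k : ℤ, Commute a (t ^ k * b * t ^ (-k)))
    (f g : FreeGroup ℤ) : Commute (conjugatesLift t a f) (conjugatesLift t b g) := by
  refine commute_of_commute_of (fun m n => ?_) f g
  have := (Commute.conj_iff (t ^ m)).2 (h (n - m))
  simp only [conjugatesLift_of]
  convert this using 1 <;> group

end conjugatesLift

abbrev ShiftProduct := FreeGroup ℤ ⋊[shift] Multiplicative ℤ

def ShiftProduct.lift {G : Type*} [Group G] (x t : G) : ShiftProduct →* G :=
  SemidirectProduct.lift (conjugatesLift t x) (zpowersHom G t) (conjugatesLift_comp_shift t x)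

@[simp] lemma ShiftProduct.lift_inl {G : Type*} [Group G] (x t : G) (f : FreeGroup ℤ) :
    ShiftProduct.lift x t (inl f) = conjugatesLift t x f := SemidirectProduct.lift_inl ..

@[simp] lemma ShiftProduct.lift_inr {G : Type*} [Group G] (x t : G) (k : Multiplicative ℤ) :
    ShiftProduct.lift x t (inr k) = t ^ k.toAdd := SemidirectProduct.lift_inr ..

def toShiftProduct : F₂ →* ShiftProduct :=
  FreeGroup.lift ![inr (ofAdd 1), inl (of 0) * inr (ofAdd 1)]

def shiftProductEquiv : ShiftProduct ≃* F₂ :=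
  (ShiftProduct.lift (of 1 * (of 0)⁻¹) (of 0)).toMulEquiv toShiftProduct
    (SemidirectProduct.hom_ext (FreeGroup.ext_hom _ _ fun n => by simp [toShiftProduct])
      (MonoidHom.ext_mint (by simp [toShiftProduct])))
    (by
      ext i
      fin_cases i <;> simp [toShiftProduct])

lemma exponentSum_shiftProductEquiv (x : ShiftProduct) :
    exponentSum (shiftProductEquiv x) = x.right := by
  have : exponentSum.comp shiftProductEquiv.toMonoidHom = rightHom :=
    SemidirectProduct.hom_ext
      (FreeGroup.ext_hom _ _ fun n => by simp [shiftProductEquiv, exponentSum])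
      (MonoidHom.ext_mint (by simp [shiftProductEquiv, exponentSum]))
  exact DFunLike.congr_fun this x

abbrev PairShiftProduct := (FreeGroup ℤ × FreeGroup ℤ) ⋊[prodAction shift shift] Multiplicative ℤ

def kerEmbedding : PairShiftProduct →* F₂ × F₂ :=
  (shiftProductEquiv.prodCongr (shiftProductEquiv.trans invertGenerators)).toMonoidHom.comp
    (toProd shift shift)

lemma kerEmbedding_injective : Injective kerEmbedding := by
  rw [kerEmbedding, MonoidHom.coe_comp]
  exact (MulEquiv.injective _).comp (toProd_injective shift shift)

lemma range_kerEmbedding :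
    kerEmbedding.range = (exponentSum.coprod exponentSum : F₂ × F₂ →* _).ker := by
  ext ⟨u, v⟩
  set v' := invertGenerators.symm v
  have hu := exponentSum_shiftProductEquiv (shiftProductEquiv.symm u)
  have hv := exponentSum_shiftProductEquiv (shiftProductEquiv.symm v')
  have hv' := exponentSum_invertGenerators v'
  rw [MulEquiv.apply_symm_apply] at hu hv hv'
  rw [kerEmbedding, MonoidHom.range_comp, mem_map_equiv, mem_range_toProd, MonoidHom.mem_ker,
    MonoidHom.coprod_apply]
  change (shiftProductEquiv.symm u).right = (shiftProductEquiv.symm v').right ↔ _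
  rw [← hu, ← hv, hv', mul_inv_eq_one]

noncomputable def kerEquiv :
    PairShiftProduct ≃* (exponentSum.coprod exponentSum : F₂ × F₂ →* _).ker :=
  (MonoidHom.ofInjective kerEmbedding_injective).trans (MulEquiv.subgroupCongr range_kerEmbedding)

def PairShiftProduct.lift {G : Type*} [Group G] (a b t : G)
    (h : ∀ k : ℤ, Commute a (t ^ k * b * t ^ (-k))) : PairShiftProduct →* G :=
  liftProd (conjugatesLift t a) (conjugatesLift t b) (commute_conjugatesLift h) (zpowersHom G t)
    (conjugatesLift_comp_shift t a) (conjugatesLift_comp_shift t b)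

abbrev F₃ := FreeGroup (Fin 3)

def presentationHom : F₃ →* PairShiftProduct :=
  FreeGroup.lift ![inl (of 0, 1), inl (1, of 0), inr (ofAdd 1)]

def relator (k : ℤ) : F₃ := ⁅(of 0 : F₃), of 2 ^ k * of 1 * of 2 ^ (-k)⁆

lemma presentationHom_comp_conjugatesLift_zero :
    presentationHom.comp (conjugatesLift (of 2) (of 0)) = inl.comp (MonoidHom.inl _ _) :=
  FreeGroup.ext_hom _ _ fun n => by simp [presentationHom]

lemma presentationHom_comp_conjugatesLift_one :
    presentationHom.comp (conjugatesLift (of 2) (of 1)) = inl.comp (MonoidHom.inr _ _) :=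
  FreeGroup.ext_hom _ _ fun n => by simp [presentationHom]

lemma presentationHom_of_two_zpow (n : ℤ) : presentationHom (of 2 ^ n) = inr (ofAdd n) := by
  have : presentationHom (of 2) = inr (ofAdd 1) := by simp [presentationHom]
  rw [_root_.map_zpow, this, ← _root_.map_zpow, ← ofAdd_zsmul, smul_eq_mul, mul_one]

lemma presentationHom_surjective : Surjective presentationHom := by
  rintro ⟨⟨f, g⟩, k⟩
  refine ⟨conjugatesLift (of 2) (of 0) f * conjugatesLift (of 2) (of 1) g * of 2 ^ k.toAdd, ?_⟩
  rw [_root_.map_mul, _root_.map_mul, ← MonoidHom.comp_apply,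
    ← MonoidHom.comp_apply (g := presentationHom), presentationHom_comp_conjugatesLift_zero,
    presentationHom_comp_conjugatesLift_one, presentationHom_of_two_zpow, ofAdd_toAdd,
    mk_eq_inl_mul_inr]
  simp [← _root_.map_mul]

lemma ker_presentationHom : presentationHom.ker = normalClosure (Set.range relator) := by
  set N := normalClosure (Set.range relator)
  refine le_antisymm (fun w hw => ?_) (normalClosure_le_normal ?_)
  · have hrel (k : ℤ) : Commute (QuotientGroup.mk' N (of 0))
        (QuotientGroup.mk' N (of 2) ^ k * QuotientGroup.mk' N (of 1) *
          QuotientGroup.mk' N (of 2) ^ (-k)) := by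
      rw [← commutatorElement_eq_one_iff_commute, ← _root_.map_zpow, ← _root_.map_zpow,
        ← _root_.map_mul, ← _root_.map_mul, ← map_commutatorElement, QuotientGroup.mk'_apply,
        QuotientGroup.eq_one_iff]
      exact subset_normalClosure ⟨k, rfl⟩
    have hχ : (PairShiftProduct.lift _ _ _ hrel).comp presentationHom = QuotientGroup.mk' N := by
      ext i
      fin_cases i <;> simp [presentationHom, PairShiftProduct.lift]
    rw [← QuotientGroup.eq_one_iff, ← QuotientGroup.mk'_apply, ← hχ, MonoidHom.comp_apply,
      MonoidHom.mem_ker.1 hw, _root_.map_one]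
  · rintro _ ⟨k, rfl⟩
    have h := DFunLike.congr_fun presentationHom_comp_conjugatesLift_one (of k)
    simp only [MonoidHom.comp_apply, conjugatesLift_of] at h
    rw [SetLike.mem_coe, MonoidHom.mem_ker, relator, map_commutatorElement, h,
      commutatorElement_eq_one_iff_commute]
    exact Commute.map (by ext <;> simp) inl

def relatorsUpTo (M : ℤ) : Subgroup F₃ := normalClosure (relator '' Set.Iic M)

instance (M : ℤ) : (relatorsUpTo M).Normal := normalClosure_normal

lemma relatorsUpTo_mono : Monotone relatorsUpTo := fun _ _ h =>
  normalClosure_mono (Set.image_mono (Set.Iic_subset_Iic.2 h))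

lemma normalClosure_range_relator_le_iSup :
    normalClosure (Set.range relator) ≤ ⨆ M, relatorsUpTo M :=
  normalClosure_le_normal fun _ ⟨k, hk⟩ =>
    mem_iSup_of_mem k (subset_normalClosure ⟨k, Set.mem_Iic.2 le_rfl, hk⟩)

def witness (M : ℤ) : F₃ →* Equiv.Perm ℤ :=
  FreeGroup.lift ![Equiv.swap M (M + 1), Equiv.swap (-2) (-1), Equiv.addRight 1]

lemma witness_relator (M k : ℤ) :
    witness M (relator k) = ⁅Equiv.swap M (M + 1), Equiv.swap (k - 2) (k - 1)⁆ := by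
  have hb : witness M (of 1) = Equiv.swap (-2) (-1) := by simp [witness]
  rw [relator, map_commutatorElement, _root_.map_mul, _root_.map_mul, zpow_neg, _root_.map_inv,
    hb, ← Equiv.swap_apply_apply]
  simp [witness, sub_eq_neg_add]

lemma relatorsUpTo_le_ker_witness (M : ℤ) : relatorsUpTo M ≤ (witness M).ker := by
  refine normalClosure_le_normal ?_
  rintro _ ⟨k, hk, rfl⟩
  rw [SetLike.mem_coe, MonoidHom.mem_ker, witness_relator, commutatorElement_eq_one_iff_commute]
  refine (Equiv.Perm.disjoint_swap_swap ?_).commute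
  simp only [List.nodup_cons, List.mem_cons, List.not_mem_nil, or_false, List.nodup_nil,
    not_false_eq_true, and_true]
  rw [Set.mem_Iic] at hk
  omega

lemma relator_succ_notMem_relatorsUpTo (M : ℤ) : relator (M + 1) ∉ relatorsUpTo M := by
  intro h
  have h' := MonoidHom.mem_ker.1 (relatorsUpTo_le_ker_witness M h)
  rw [witness_relator, commutatorElement_eq_one_iff_commute,
    show M + 1 - 2 = M - 1 by ring, add_sub_cancel_right] at h'
  have := congr($(h'.eq) (M - 1))
  rw [Equiv.Perm.mul_apply, Equiv.Perm.mul_apply, Equiv.swap_apply_left, Equiv.swap_apply_left,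
    Equiv.swap_apply_of_ne_of_ne (show M - 1 ≠ M by omega) (show M - 1 ≠ M + 1 by omega),
    Equiv.swap_apply_left] at this
  omega

theorem PairShiftProduct.not_isFinitelyPresented :
    ¬ Group.IsFinitelyPresented PairShiftProduct := by
  intro hP
  have hker := hP.ker_isFinitelyNormallyGenerated presentationHom presentationHom_surjective
  rw [ker_presentationHom] at hker
  obtain ⟨M, hM⟩ := hker.exists_le_of_le_iSup relatorsUpTo_mono.directed_le
    normalClosure_range_relator_le_iSup
  exact relator_succ_notMem_relatorsUpTo M (hM (subset_normalClosure ⟨M + 1, rfl⟩))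

end Stallings

/-- Stallings' example: the kernel of the homomorphism `F₂ × F₂ → ℤ` sending each
standard generator to `1` is not finitely presentable. -/
theorem stallings_kernel_not_finitely_presentable
    (τ : FreeGroup (Fin 2) × FreeGroup (Fin 2) →* Multiplicative ℤ)
    (h₁ : ∀ i : Fin 2, τ (FreeGroup.of i, 1) = Multiplicative.ofAdd 1)
    (h₂ : ∀ i : Fin 2, τ (1, FreeGroup.of i) = Multiplicative.ofAdd 1) :
    ¬ ∃ (n : ℕ) (R : Set (FreeGroup (Fin n))), R.Finite ∧
      Nonempty (PresentedGroup R ≃* τ.ker) := by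
  rintro ⟨n, R, hR, ⟨e⟩⟩
  have : Finite R := hR
  have : Group.IsFinitelyPresented τ.ker := .equiv e
  obtain rfl := Stallings.eq_coprod_exponentSum τ h₁ h₂
  exact Stallings.PairShiftProduct.not_isFinitelyPresented (.equiv Stallings.kerEquiv.symm)
end
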